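/- Let Σ be a spread set of symmetric n×n matrices over Z/2Z containing 0 (i.e., 2^n symmetric matrices, pairwise differences nonsingular). Then the set {B_{R̂} : R ∈ Σ \ {0}} ∪ {0} of functions (Z/2Z)^n → Z/4Z, where B_{R̂}(v) = v̂ R̂ v̂ᵀ and R̂ lifts R entrywise to Z/4Z, is a mubent set: the difference of any two distinct members is bent in the Z/4Z sense. -/

import Mathlib

open Finset Matrix

/-- The coordinatewise lift `(ℤ/2ℤ)^n → (ℤ/4ℤ)^n` sending `0 ↦ 0`, `1 ↦ 1`. -/
def liftVec (n : ℕ) (v : Fin n → ZMod 2) : Fin n → ZMod 4 :=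
  fun i => ((v i).val : ZMod 4)

/-- The entrywise lift of a matrix over `ℤ/2ℤ` to `ℤ/4ℤ`. -/
def liftMat (n : ℕ) (R : Matrix (Fin n) (Fin n) (ZMod 2)) :
    Matrix (Fin n) (Fin n) (ZMod 4) :=
  R.map (fun a => ((a.val : ZMod 4)))

/-- `B_{R̂}(v) = v̂ R̂ v̂ᵀ`.  (Note `B_{0̂} = 0`.) -/
def quadForm (n : ℕ) (R : Matrix (Fin n) (Fin n) (ZMod 2))
    (v : Fin n → ZMod 2) : ZMod 4 :=
  liftVec n v ⬝ᵥ (liftMat n R).mulVec (liftVec n v)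

/-- Reduction mod 2, as a ring hom `ℤ/4ℤ → ℤ/2ℤ`. -/
def phi : ZMod 4 →+* ZMod 2 := ZMod.castHom (show 2 ∣ 4 by norm_num) (ZMod 2)

lemma phi_lift : ∀ a : ZMod 2, phi ((a.val : ZMod 4)) = a := by decide

lemma two_mul_congr : ∀ x y : ZMod 4, phi x = phi y → 2 * x = 2 * y := by decide

lemma phi_dot {n : ℕ} (x y : Fin n → ZMod 4) (A : Matrix (Fin n) (Fin n) (ZMod 4)) :
    phi (x ⬝ᵥ A.mulVec y) = (fun i => phi (x i)) ⬝ᵥ (A.map phi).mulVec (fun i => phi (y i)) := by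
  simp [dotProduct, mulVec, map_sum, _root_.map_mul, Matrix.map_apply, Finset.mul_sum]

lemma dot_symm {n : ℕ} (D : Matrix (Fin n) (Fin n) (ZMod 4)) (hD : Dᵀ = D)
    (x y : Fin n → ZMod 4) : x ⬝ᵥ D.mulVec y = y ⬝ᵥ D.mulVec x := by
  rw [Matrix.dotProduct_mulVec, ← Matrix.mulVec_transpose, hD, dotProduct_comm]

lemma liftVec_add (n : ℕ) (v u : Fin n → ZMod 2) :
    liftVec n (v + u) = liftVec n v + liftVec n u + (2 : ZMod 4) • (liftVec n v * liftVec n u) := by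
  funext i
  have h : ∀ a b : ZMod 2, (((a + b).val : ZMod 4))
      = (a.val : ZMod 4) + (b.val : ZMod 4) + 2 * ((a.val : ZMod 4) * (b.val : ZMod 4)) := by
    decide
  simpa [liftVec, smul_eq_mul] using h (v i) (u i)

/-- The key identity: for symmetric `R, T`, the difference of the lifted quadratic forms
satisfies `Δ_u(v) = Δ_u(0-part) + 2 · (v ⬝ (R-T)u)`. -/
lemma keyA (n : ℕ) (R T : Matrix (Fin n) (Fin n) (ZMod 2)) (hR : Rᵀ = R) (hT : Tᵀ = T)
    (v u : Fin n → ZMod 2) :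
    (quadForm n R (v + u) - quadForm n T (v + u)) - (quadForm n R v - quadForm n T v)
      = (quadForm n R u - quadForm n T u)
        + 2 * (((v ⬝ᵥ (R - T).mulVec u).val : ZMod 4)) := by
  set D := liftMat n R - liftMat n T with hDdef
  have hD : Dᵀ = D := by
    simp [hDdef, liftMat, transpose_sub, ← Matrix.transpose_map, hR, hT]
  have hq : ∀ w, quadForm n R w - quadForm n T w = liftVec n w ⬝ᵥ D.mulVec (liftVec n w) := by
    intro w
    simp [quadForm, hDdef, Matrix.sub_mulVec, dotProduct_sub]
  set a := liftVec n v
  set b := liftVec n u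
  have h2 : 2 * (a ⬝ᵥ D.mulVec b)
      = 2 * (((v ⬝ᵥ (R - T).mulVec u).val : ZMod 4)) := by
    apply two_mul_congr
    rw [phi_dot, phi_lift]
    have hav : (fun i => phi (a i)) = v := by funext i; exact phi_lift (v i)
    have hbu : (fun i => phi (b i)) = u := by funext i; exact phi_lift (u i)
    have hDM : D.map phi = R - T := by
      ext i j
      simp [hDdef, liftMat, Matrix.map_apply, map_sub, phi_lift]
    rw [hav, hbu, hDM]
  rw [hq, hq, hq, liftVec_add n v u]
  have h4 : (4 : ZMod 4) = 0 := by decide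
  set c := a * b
  rw [show liftVec n v = a from rfl, show liftVec n u = b from rfl]
  simp only [Matrix.mulVec_add, Matrix.mulVec_smul, dotProduct_add, add_dotProduct,
    dotProduct_smul, smul_dotProduct, smul_eq_mul]
  rw [dot_symm D hD b a, dot_symm D hD c a, dot_symm D hD c b]
  rw [← h2] at *
  ring_nf
  linear_combination (a ⬝ᵥ D.mulVec (a*b) + b ⬝ᵥ D.mulVec (a*b) + ((a*b) ⬝ᵥ D.mulVec (a*b))) * h4

lemma card_shift {n : ℕ} (Δ : (Fin n → ZMod 2) → ZMod 4) (v₀ : Fin n → ZMod 2)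
    (h : ∀ v, Δ (v + v₀) = Δ v + 2) (k : ZMod 4) :
    (Finset.univ.filter fun v => Δ v = k).card
      = (Finset.univ.filter fun v => Δ v = k + 2).card := by
  have hinv : ∀ v : Fin n → ZMod 2, v + v₀ + v₀ = v := by
    intro v; funext i
    simp [add_assoc, CharTwo.add_self_eq_zero]
  have h22 : (2 : ZMod 4) + 2 = 0 := by decide
  apply Finset.card_bij' (fun v _ => v + v₀) (fun v _ => v + v₀)
  · intro a ha
    simp only [Finset.mem_filter, Finset.mem_univ, true_and] at ha ⊢
    rw [h, ha]
  · intro a ha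
    simp only [Finset.mem_filter, Finset.mem_univ, true_and] at ha ⊢
    rw [h, ha, add_assoc, h22, add_zero]
  · intro a _; exact hinv a
  · intro a _; exact hinv a

theorem stmt_15 (n : ℕ)
    (S : Finset (Matrix (Fin n) (Fin n) (ZMod 2)))
    (hzero : 0 ∈ S) (hcard : S.card = 2 ^ n)
    (hsymm : ∀ R ∈ S, Rᵀ = R)
    (hspread : ∀ R ∈ S, ∀ T ∈ S, R ≠ T → IsUnit (R - T).det) :
    ∀ R ∈ S, ∀ T ∈ S, R ≠ T →
      ∀ u : Fin n → ZMod 2, u ≠ 0 →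
        ((Finset.univ.filter (fun v =>
          (quadForm n R (v + u) - quadForm n T (v + u)) -
            (quadForm n R v - quadForm n T v) = 0)).card =
         (Finset.univ.filter (fun v =>
          (quadForm n R (v + u) - quadForm n T (v + u)) -
            (quadForm n R v - quadForm n T v) = 2)).card ∧
         (Finset.univ.filter (fun v =>
          (quadForm n R (v + u) - quadForm n T (v + u)) -
            (quadForm n R v - quadForm n T v) = 1)).card =
         (Finset.univ.filter (fun v =>
          (quadForm n R (v + u) - quadForm n T (v + u)) -
            (quadForm n R v - quadForm n T v) = 3)).card) := by
  intro R hR T hT hne u hu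
  set M := R - T with hM
  have hMdet : IsUnit M.det := hspread R hR T hT hne
  have hMu : M.mulVec u ≠ 0 := by
    intro h0
    apply hu
    have := congrArg (M⁻¹.mulVec) h0
    rwa [Matrix.mulVec_mulVec, Matrix.nonsing_inv_mul M hMdet, Matrix.one_mulVec,
      Matrix.mulVec_zero] at this
  obtain ⟨i, hi⟩ := Function.ne_iff.mp hMu
  have hwi : M.mulVec u i = 1 := by
    have : ∀ a : ZMod 2, a ≠ 0 → a = 1 := by decide
    exact this _ hi
  set v₀ : Fin n → ZMod 2 := Pi.single i 1 with hv₀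
  have hdot : v₀ ⬝ᵥ M.mulVec u = 1 := by
    simp [hv₀, single_dotProduct, hwi]
  set Δ : (Fin n → ZMod 2) → ZMod 4 := fun v =>
    (quadForm n R (v + u) - quadForm n T (v + u)) - (quadForm n R v - quadForm n T v) with hΔ
  have hshift : ∀ v, Δ (v + v₀) = Δ v + 2 := by
    intro v
    have e1 := keyA n R T (hsymm R hR) (hsymm T hT) v u
    have e2 := keyA n R T (hsymm R hR) (hsymm T hT) (v + v₀) u
    have hadd : (v + v₀) ⬝ᵥ M.mulVec u = v ⬝ᵥ M.mulVec u + 1 := by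
      rw [add_dotProduct, hdot]
    have hstep : ∀ x : ZMod 2,
        2 * (((x + 1).val : ZMod 4)) = 2 * ((x.val : ZMod 4)) + 2 := by decide
    rw [hΔ]
    simp only []
    rw [e1, e2, ← hM, hadd, hstep, add_assoc]
  exact ⟨by simpa using card_shift Δ v₀ hshift 0,
         by have h := card_shift Δ v₀ hshift 1
            rw [show (1 : ZMod 4) + 2 = 3 by decide] at h
            exact h⟩
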